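/- arXiv:1905.00069 — 6 statements merged into one kernel-verified Lean document; each statement's English description precedes it below -/
import Mathlib

section
/- Let X be a nonnegative random variable with density f_X and let ξ be inverse gamma with shape m > 1 and mean 1, independent of X. Define W = w̄ ξ X for a constant w̄ > 0. Then the density of W is f_W(u) = w̄^m (m−1)^m / (u^{m+1} Γ(m)) · φ_X^{(m)}((1−m) w̄ / u), where φ_X^{(p)}(s) = ∫₀^∞ x^p e^{x s} f_X(x) dx is the generalized MGF of X, provided φ_X^{(m)}((1−m)w̄/u) is finite. -/
open MeasureTheory Set

/-- PDF of an inverse-gamma-based composite fading model in terms of the generalized MGF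
of the underlying fading density (Lemma 1 of the paper). -/
theorem composite_pdf_gmgf (m w u : ℝ) (hm : 1 < m) (hw : 0 < w) (hu : 0 < u)
    (fX : ℝ → ℝ) (hf0 : ∀ x, 0 ≤ fX x) (hf1 : ∫ x in Ioi (0:ℝ), fX x = 1)
    (hint : IntegrableOn (fun x => x ^ m * Real.exp (x * ((1 - m) * w / u)) * fX x) (Ioi 0)) :
    ∫ t in Ioi (0:ℝ), (t / w) * fX (u * t / w) *
        ((m - 1) ^ m / Real.Gamma m * t ^ (m - 1) * Real.exp (-(m - 1) * t)) =
      w ^ m * (m - 1) ^ m / (u ^ (m + 1) * Real.Gamma m) *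
        ∫ x in Ioi (0:ℝ), x ^ m * Real.exp (x * ((1 - m) * w / u)) * fX x := by
  have hG : (0:ℝ) < Real.Gamma m := Real.Gamma_pos_of_pos (by linarith)
  have ha : (0:ℝ) < u / w := by positivity
  set G : ℝ → ℝ := fun x => x ^ m * Real.exp (x * ((1 - m) * w / u)) * fX x with hGdef
  set k : ℝ := (m - 1) ^ m / Real.Gamma m * (w / u) ^ m / w with hk
  have key : ∀ t ∈ Ioi (0:ℝ),
      (t / w) * fX (u * t / w) *
        ((m - 1) ^ m / Real.Gamma m * t ^ (m - 1) * Real.exp (-(m - 1) * t))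
      = k * G ((u / w) * t) := by
    intro t ht
    have ht : 0 < t := ht
    have h1 : (u / w) * t = u * t / w := by ring
    have h2 : ((u / w) * t) ^ m = (u / w) ^ m * t ^ m :=
      Real.mul_rpow ha.le ht.le
    have h3 : ((u / w) * t) * ((1 - m) * w / u) = -(m - 1) * t := by
      field_simp; ring
    have h4 : t ^ (m - 1) * t = t ^ m := by
      rw [← Real.rpow_add_one ht.ne' (m - 1)]; ring_nf
    have h5 : (w / u) ^ m * (u / w) ^ m = 1 := by
      rw [← Real.mul_rpow (by positivity) ha.le]
      rw [div_mul_div_comm, mul_comm w u, div_self (by positivity), Real.one_rpow]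
    rw [h1] at h2 h3
    simp only [hGdef, hk, h1, h2, h3]
    linear_combination ((m - 1) ^ m / Real.Gamma m * Real.exp (-(m - 1) * t) *
        fX (u * t / w) / w) * h4 -
      ((m - 1) ^ m / Real.Gamma m * t ^ m * Real.exp (-(m - 1) * t) *
        fX (u * t / w) / w) * h5
  rw [setIntegral_congr_fun measurableSet_Ioi key, integral_const_mul]
  have comp := MeasureTheory.integral_comp_mul_left_Ioi G 0 ha
  rw [mul_zero] at comp
  rw [comp, smul_eq_mul]
  rw [← mul_assoc]
  congr 1
  have h6 : (w / u) ^ m = w ^ m / u ^ m := Real.div_rpow hw.le hu.le m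
  have h7 : u ^ (m + 1) = u ^ m * u := by
    rw [Real.rpow_add hu, Real.rpow_one]
  rw [hk, h6, h7]
  have hum : (0:ℝ) < u ^ m := Real.rpow_pos_of_pos hu m
  field_simp
end

section
/- Let X be a nonnegative random variable with CDF F_X and PDF f_X, and let ξ be inverse gamma with shape m ∈ ℕ, m ≥ 2, and mean 1, independent of X. Define W = w̄ ξ X with w̄ > 0. Then for u > 0, F_W(u) = Σ_{n=0}^{m−1} (m−1)^n w̄^n / (u^n n!) · φ_X^{(n)}((1−m) w̄ / u), where φ_X^{(n)}(s) = ∫₀^∞ x^n e^{xs} f_X(x) dx. -/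
/-!
Writing `F_X (u t / w) = ∫_{(0, u t / w]} f_X` and exchanging the two integrals (Tonelli),
the left-hand side becomes `∫ f_X(y) · P(T > w y / u) dy` for `T` gamma distributed with
integer shape `m` and rate `c = m - 1`. For integer shape the gamma tail is the Erlang
formula `P(T > a) = e^{-c a} ∑_{n < m} (c a)^n / n!`, obtained from an explicit primitive of
`t^{m-1} e^{-c t}`; expanding it turns each summand into a generalized moment generating
function of `X` evaluated at `-c w / u`.
-/

open MeasureTheory Set
open Filter Topology Real Nat
open scoped ENNReal

noncomputable def expPartialSum (k : ℕ) (x : ℝ) : ℝ :=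
  ∑ n ∈ Finset.range (k + 1), x ^ n / (n ! : ℝ)

theorem hasDerivAt_expPartialSum_mul_exp_neg (k : ℕ) (x : ℝ) :
    HasDerivAt (fun x => expPartialSum k x * exp (-x)) (-(x ^ k / (k ! : ℝ)) * exp (-x)) x := by
  induction k with
  | zero => simpa [expPartialSum] using (hasDerivAt_neg x).exp
  | succ k ih =>
    have hterm : HasDerivAt (fun x : ℝ => x ^ (k + 1) / ((k + 1)! : ℝ) * exp (-x))
        ((x ^ k / (k ! : ℝ) - x ^ (k + 1) / ((k + 1)! : ℝ)) * exp (-x)) x := by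
      refine (((hasDerivAt_pow (k + 1) x).div_const ((k + 1)! : ℝ)).mul
        (hasDerivAt_neg x).exp).congr_deriv ?_
      rw [Nat.factorial_succ]
      push_cast
      field_simp
      ring
    simp_rw [expPartialSum, Finset.sum_range_succ _ (k + 1), add_mul]
    refine (ih.add hterm).congr_deriv ?_
    ring

theorem tendsto_expPartialSum_mul_exp_neg_atTop (k : ℕ) :
    Tendsto (fun x => expPartialSum k x * exp (-x)) atTop (𝓝 0) := by
  simp_rw [expPartialSum, Finset.sum_mul]
  rw [← Finset.sum_const_zero (s := Finset.range (k + 1))]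
  refine tendsto_finsetSum _ fun n _ => ?_
  simpa [mul_div_right_comm] using
    (tendsto_pow_mul_exp_neg_atTop_nhds_zero n).div_const (n ! : ℝ)

section GammaTail

variable (k : ℕ) {c : ℝ}

theorem hasDerivAt_neg_expPartialSum_mul_exp_neg_mul (hc : c ≠ 0) (t : ℝ) :
    HasDerivAt (fun t => -((k ! : ℝ) / c ^ (k + 1)) * (expPartialSum k (c * t) * exp (-(c * t))))
      (t ^ k * exp (-c * t)) t := by
  refine (((hasDerivAt_expPartialSum_mul_exp_neg k (c * t)).comp t
    ((hasDerivAt_id t).const_mul c)).const_mul (-((k ! : ℝ) / c ^ (k + 1)))).congr_deriv ?_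
  rw [neg_mul c t]
  field_simp
  ring

theorem tendsto_neg_expPartialSum_mul_exp_neg_mul_atTop (hc : 0 < c) :
    Tendsto (fun t => -((k ! : ℝ) / c ^ (k + 1)) * (expPartialSum k (c * t) * exp (-(c * t))))
      atTop (𝓝 0) := by
  simpa using ((tendsto_expPartialSum_mul_exp_neg_atTop k).comp
    (tendsto_id.const_mul_atTop hc)).const_mul (-((k ! : ℝ) / c ^ (k + 1)))

theorem integrableOn_Ioi_pow_mul_exp_neg_mul (hc : 0 < c) {a : ℝ} (ha : 0 ≤ a) :
    IntegrableOn (fun t => t ^ k * exp (-c * t)) (Ioi a) :=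
  integrableOn_Ioi_deriv_of_nonneg'
    (fun t _ => hasDerivAt_neg_expPartialSum_mul_exp_neg_mul k hc.ne' t)
    (fun t ht => by have := ha.trans ht.le; positivity)
    (tendsto_neg_expPartialSum_mul_exp_neg_mul_atTop k hc)

theorem integral_Ioi_pow_mul_exp_neg_mul (hc : 0 < c) {a : ℝ} (ha : 0 ≤ a) :
    ∫ t in Ioi a, t ^ k * exp (-c * t) =
      (k ! : ℝ) / c ^ (k + 1) * (expPartialSum k (c * a) * exp (-(c * a))) := by
  rw [integral_Ioi_of_hasDerivAt_of_nonneg'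
    (fun t _ => hasDerivAt_neg_expPartialSum_mul_exp_neg_mul k hc.ne' t)
    (fun t ht => by have := ha.trans ht.le; positivity)
    (tendsto_neg_expPartialSum_mul_exp_neg_mul_atTop k hc)]
  ring

end GammaTail

theorem integral_toReal_lintegral_comm {α β : Type*} [MeasurableSpace α] [MeasurableSpace β]
    {μ : Measure α} {ν : Measure β} [SFinite μ] [SFinite ν] {F : α → β → ℝ≥0∞}
    (hF : AEMeasurable (Function.uncurry F) (μ.prod ν))
    (hν : ∀ᵐ a ∂μ, ∫⁻ b, F a b ∂ν < ∞) (hμ : ∀ᵐ b ∂ν, ∫⁻ a, F a b ∂μ < ∞) :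
    ∫ a, (∫⁻ b, F a b ∂ν).toReal ∂μ = ∫ b, (∫⁻ a, F a b ∂μ).toReal ∂ν :=
  calc _ = (∫⁻ a, ∫⁻ b, F a b ∂ν ∂μ).toReal := integral_toReal hF.lintegral_prod_right' hν
    _ = (∫⁻ b, ∫⁻ a, F a b ∂μ ∂ν).toReal := by rw [lintegral_lintegral_swap hF]
    _ = _ := (integral_toReal hF.prod_swap.lintegral_prod_right' hμ).symm

theorem integral_Ioi_integral_Ioc_mul_eq_integral_Ioi_mul_integral_Ioi {f g : ℝ → ℝ} {r : ℝ}
    (hr : 0 < r) (hf : IntegrableOn f (Ioi 0)) (hf0 : ∀ y ∈ Ioi 0, 0 ≤ f y)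
    (hg : IntegrableOn g (Ioi 0)) (hg0 : ∀ t ∈ Ioi 0, 0 ≤ g t) :
    ∫ t in Ioi 0, (∫ y in Ioc 0 (r * t), f y) * g t =
      ∫ y in Ioi 0, f y * ∫ t in Ioi (y / r), g t := by
  set S : Set (ℝ × ℝ) := {p | p.2 ≤ r * p.1}
  set F : ℝ → ℝ → ℝ≥0∞ := fun t y =>
    S.indicator (fun p => ENNReal.ofReal (f p.2 * g p.1)) (t, y)
  have hF : AEMeasurable (Function.uncurry F)
      ((volume.restrict (Ioi 0)).prod (volume.restrict (Ioi 0))) :=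
    (ENNReal.measurable_ofReal.comp_aemeasurable
      (hf.aemeasurable.comp_snd.mul hg.aemeasurable.comp_fst)).indicator
      (measurableSet_le measurable_snd (measurable_fst.const_mul r))
  have hslice_y : ∀ t ∈ Ioi (0 : ℝ), ∫⁻ y in Ioi 0, F t y =
      ENNReal.ofReal ((∫ y in Ioc 0 (r * t), f y) * g t) := by
    intro t ht
    have hind : ∀ y, F t y = (Iic (r * t)).indicator (fun y => ENNReal.ofReal (f y * g t)) y :=
      fun y => by simp [F, S, indicator_apply]
    rw [lintegral_congr hind, lintegral_indicator measurableSet_Iic,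
      Measure.restrict_restrict measurableSet_Iic, Iic_inter_Ioi,
      ← ofReal_integral_eq_lintegral_ofReal ((hf.mono_set Ioc_subset_Ioi_self).mul_const _)
        ((ae_restrict_iff' measurableSet_Ioc).2 (Eventually.of_forall fun y hy =>
          mul_nonneg (hf0 y hy.1) (hg0 t ht))), integral_mul_const]
  have hslice_t : ∀ y ∈ Ioi (0 : ℝ), ∫⁻ t in Ioi 0, F t y =
      ENNReal.ofReal (f y * ∫ t in Ioi (y / r), g t) := by
    intro y hy
    have hyr : 0 < y / r := div_pos hy hr
    have hind : ∀ t, F t y = (Ici (y / r)).indicator (fun t => ENNReal.ofReal (f y * g t)) t :=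
      fun t => by simp [F, S, indicator_apply, div_le_iff₀' hr]
    rw [lintegral_congr hind, lintegral_indicator measurableSet_Ici,
      Measure.restrict_restrict measurableSet_Ici,
      inter_eq_left.2 (Ici_subset_Ioi.2 hyr), setLIntegral_congr Ioi_ae_eq_Ici.symm,
      ← ofReal_integral_eq_lintegral_ofReal
        ((hg.mono_set (Ioi_subset_Ioi hyr.le)).const_mul _)
        ((ae_restrict_iff' measurableSet_Ioi).2 (Eventually.of_forall fun t ht =>
          mul_nonneg (hf0 y hy) (hg0 t (hyr.trans ht)))), integral_const_mul]
  calc ∫ t in Ioi 0, (∫ y in Ioc 0 (r * t), f y) * g t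
      = ∫ t in Ioi 0, (∫⁻ y in Ioi 0, F t y).toReal := by
        refine setIntegral_congr_fun measurableSet_Ioi fun t ht => ?_
        rw [hslice_y t ht, ENNReal.toReal_ofReal]
        exact mul_nonneg (setIntegral_nonneg measurableSet_Ioc fun y hy => hf0 y hy.1) (hg0 t ht)
    _ = ∫ y in Ioi 0, (∫⁻ t in Ioi 0, F t y).toReal :=
        integral_toReal_lintegral_comm hF
          ((ae_restrict_iff' measurableSet_Ioi).2 (Eventually.of_forall fun t ht => by
            rw [hslice_y t ht]; exact ENNReal.ofReal_lt_top))
          ((ae_restrict_iff' measurableSet_Ioi).2 (Eventually.of_forall fun y hy => by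
            rw [hslice_t y hy]; exact ENNReal.ofReal_lt_top))
    _ = ∫ y in Ioi 0, f y * ∫ t in Ioi (y / r), g t := by
        refine setIntegral_congr_fun measurableSet_Ioi fun y hy => ?_
        rw [hslice_t y hy, ENNReal.toReal_ofReal]
        exact mul_nonneg (hf0 y hy)
          (setIntegral_nonneg measurableSet_Ioi fun t ht => hg0 t ((div_pos hy hr).trans ht))

/-- CDF of an inverse-gamma-based composite model with integer shape m ≥ 2, as a finite
sum of GMGF evaluations of the underlying fading density (Corollary 1 of the paper). -/
theorem composite_cdf_integer_m (m : ℕ) (hm : 2 ≤ m) (w u : ℝ) (hw : 0 < w) (hu : 0 < u)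
    (fX FX : ℝ → ℝ) (hf0 : ∀ x, 0 ≤ fX x) (hf1 : ∫ x in Ioi (0:ℝ), fX x = 1)
    (hFX : ∀ x, FX x = ∫ y in Ioc (0:ℝ) x, fX y)
    (hint : ∀ n, n < m →
      IntegrableOn (fun x => x ^ n * Real.exp (x * ((1 - (m:ℝ)) * w / u)) * fX x) (Ioi 0)) :
    ∫ t in Ioi (0:ℝ), FX (u * t / w) *
        (((m:ℝ) - 1) ^ m / Real.Gamma (m:ℝ) * t ^ (m - 1) * Real.exp (-((m:ℝ) - 1) * t)) =
      ∑ n ∈ Finset.range m, ((m:ℝ) - 1) ^ n * w ^ n / (u ^ n * (n.factorial : ℝ)) *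
        ∫ x in Ioi (0:ℝ), x ^ n * Real.exp (x * ((1 - (m:ℝ)) * w / u)) * fX x := by
  obtain ⟨k, rfl⟩ : ∃ k, m = k + 1 := ⟨m - 1, by omega⟩
  set c : ℝ := ((k + 1 : ℕ) : ℝ) - 1 with hc_def
  have hc : 0 < c := by
    rw [hc_def, Nat.cast_succ, add_sub_cancel_right]
    exact_mod_cast (by omega : 0 < k)
  have hΓ : Real.Gamma ((k + 1 : ℕ) : ℝ) = k ! := by
    rw [Nat.cast_succ, Real.Gamma_nat_eq_factorial]
  have hfX : IntegrableOn fX (Ioi 0) :=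
    Integrable.of_integral_ne_zero (by rw [hf1]; exact one_ne_zero)
  have hexpand : ∀ y ∈ Ioi (0:ℝ), c ^ (k + 1) / Real.Gamma ((k + 1 : ℕ) : ℝ) *
      (fX y * ∫ t in Ioi (y / (u / w)), t ^ k * exp (-c * t)) =
      ∑ n ∈ Finset.range (k + 1), c ^ n * w ^ n / (u ^ n * (n ! : ℝ)) *
        (y ^ n * exp (y * ((1 - ((k + 1 : ℕ) : ℝ)) * w / u)) * fX y) := by
    intro y hy
    rw [integral_Ioi_pow_mul_exp_neg_mul k hc (div_pos hy (div_pos hu hw)).le, hΓ,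
      expPartialSum, Finset.sum_mul, Finset.mul_sum, Finset.mul_sum, Finset.mul_sum]
    refine Finset.sum_congr rfl fun n _ => ?_
    rw [div_div_eq_mul_div,
      show y * ((1 - ((k + 1 : ℕ) : ℝ)) * w / u) = -(c * (y * w / u)) by rw [hc_def]; ring]
    simp only [mul_pow, div_pow]
    field_simp [hu.ne', hc.ne']
  calc _ = c ^ (k + 1) / Real.Gamma ((k + 1 : ℕ) : ℝ) *
        ∫ t in Ioi (0:ℝ), (∫ y in Ioc 0 (u / w * t), fX y) * (t ^ k * exp (-c * t)) := by
        rw [← integral_const_mul]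
        refine integral_congr_ae (Eventually.of_forall fun t => ?_)
        simp only [hFX, Nat.add_sub_cancel, mul_div_right_comm u t w]
        ring
    _ = c ^ (k + 1) / Real.Gamma ((k + 1 : ℕ) : ℝ) *
        ∫ y in Ioi (0:ℝ), fX y * ∫ t in Ioi (y / (u / w)), t ^ k * exp (-c * t) := by
        rw [integral_Ioi_integral_Ioc_mul_eq_integral_Ioi_mul_integral_Ioi (by positivity) hfX
          (fun y _ => hf0 y) (integrableOn_Ioi_pow_mul_exp_neg_mul k hc le_rfl)
          (fun t ht => by have := ht.out.le; positivity)]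
    _ = _ := by
        rw [← integral_const_mul, setIntegral_congr_fun measurableSet_Ioi hexpand,
          integral_finsetSum _ fun n hn => (hint n (Finset.mem_range.1 hn)).const_mul _]
        simp only [integral_const_mul]
end

section
/- Let Y be a Gamma random variable with shape k > 0 and mean Ω > 0 (density f^G(k,Ω;y) = k^k/(Γ(k)Ω^k) y^{k−1} e^{−ky/Ω}) and let ξ be inverse gamma with shape m > 1 and mean 1, independent of Y. Then W = ξ Y has the Fisher–Snedecor F density f^F(m,k,Ω;t) = (m−1)^m k^k / B(m,k) · t^{k−1} Ω^m / ((m−1)Ω + kt)^{m+k} for t > 0, where B is the Beta function. -/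
open MeasureTheory Set

/-- Beta function. -/
noncomputable def realBeta (a b : ℝ) : ℝ := Real.Gamma a * Real.Gamma b / Real.Gamma (a + b)

/-- The product of an inverse gamma shadowing (shape m, mean 1) and a Gamma fading
variable (shape k, mean Ω) has the Fisher–Snedecor F density. -/
theorem ig_gamma_is_F (m k Ω : ℝ) (hm : 1 < m) (hk : 0 < k) (hΩ : 0 < Ω)
    (t : ℝ) (ht : 0 < t) :
    ∫ s in Ioi (0:ℝ),
        s * (k ^ k / (Real.Gamma k * Ω ^ k) * (t * s) ^ (k - 1) * Real.exp (-k * (t * s) / Ω)) *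
          ((m - 1) ^ m / Real.Gamma m * s ^ (m - 1) * Real.exp (-(m - 1) * s)) =
      (m - 1) ^ m * k ^ k / realBeta m k * (t ^ (k - 1) * Ω ^ m / ((m - 1) * Ω + k * t) ^ (m + k)) := by
  have hm1 : (0:ℝ) < m - 1 := by linarith
  have hmk : (0:ℝ) < m + k := by linarith
  have hl : (0:ℝ) < (m - 1) + k * t / Ω := by positivity
  have hD : (0:ℝ) < (m - 1) * Ω + k * t := by positivity
  have hΓm := Real.Gamma_pos_of_pos (show (0:ℝ) < m by linarith)
  have hΓk := Real.Gamma_pos_of_pos hk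
  have hΓmk := Real.Gamma_pos_of_pos hmk
  have key : ∫ s in Ioi (0:ℝ),
        s * (k ^ k / (Real.Gamma k * Ω ^ k) * (t * s) ^ (k - 1) * Real.exp (-k * (t * s) / Ω)) *
          ((m - 1) ^ m / Real.Gamma m * s ^ (m - 1) * Real.exp (-(m - 1) * s)) =
      ∫ s in Ioi (0:ℝ),
        (k ^ k / (Real.Gamma k * Ω ^ k) * t ^ (k - 1) * ((m - 1) ^ m / Real.Gamma m)) *
          (s ^ (m + k - 1) * Real.exp (-(((m - 1) + k * t / Ω) * s))) := by
    refine setIntegral_congr_fun measurableSet_Ioi (fun s hs => ?_)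
    have hs : (0:ℝ) < s := hs
    rw [Real.mul_rpow ht.le hs.le,
      show m + k - 1 = 1 + (k - 1) + (m - 1) by ring,
      Real.rpow_add hs, Real.rpow_add hs, Real.rpow_one,
      show -(((m - 1) + k * t / Ω) * s) = -k * (t * s) / Ω + -(m - 1) * s by ring,
      Real.exp_add]
    ring
  rw [key, integral_const_mul,
    Real.integral_rpow_mul_exp_neg_mul_Ioi hmk hl,
    show 1 / ((m - 1) + k * t / Ω) = Ω / ((m - 1) * Ω + k * t) by
      field_simp,
    Real.div_rpow hΩ.le hD.le, Real.rpow_add hΩ]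
  unfold realBeta
  have h1 : Ω ^ k ≠ 0 := (Real.rpow_pos_of_pos hΩ k).ne'
  have h2 : ((m - 1) * Ω + k * t) ^ (m + k) ≠ 0 := (Real.rpow_pos_of_pos hD _).ne'
  field_simp
end

section
/- Suppose the fading random variable X has density f_X(u) = Σ_{i=1}^N w_i f^G(k_i, Ω_i; u) where each f^G is a Gamma density with shape k_i and mean Ω_i, the w_i are nonnegative and sum to 1. Let ξ be inverse gamma with shape m > 1 and mean 1, independent of X. Then W = ξ X has density f_W(u) = Σ_{i=1}^N w_i f^F(m, k_i, Ω_i; u), a finite mixture of Fisher–Snedecor F densities. -/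
open MeasureTheory Set

/-- Gamma density with shape k and mean Ω. -/
noncomputable def fG (k Ω y : ℝ) : ℝ :=
  k ^ k / (Real.Gamma k * Ω ^ k) * y ^ (k - 1) * Real.exp (-k * y / Ω)

/-- Fisher–Snedecor F density with shadowing shape m, fading shape k and mean Ω. -/
noncomputable def fF (m k Ω t : ℝ) : ℝ :=
  (m - 1) ^ m * k ^ k / realBeta m k * (t ^ (k - 1) * Ω ^ m / ((m - 1) * Ω + k * t) ^ (m + k))

/-!
Every Gamma component of `X` has shape `k` and rate `k / Ω`, and `1 / ξ` is Gamma with shape `m`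
and rate `m - 1`. For one component the integrand `t f_X(u t) f_{1/ξ}(t)` is a constant times
`t ^ (k + m - 1) * exp (-(k u / Ω + m - 1) t)`, a Gamma kernel whose integral is
`Γ(k + m) / (k u / Ω + m - 1) ^ (k + m)`; this is the F density at `u`. The mixture case follows
by linearity of the integral.
-/

open ProbabilityTheory

lemma realBeta_comm (a b : ℝ) : realBeta a b = realBeta b a := by
  rw [realBeta, realBeta, mul_comm, add_comm]

lemma realBeta_pos {a b : ℝ} (ha : 0 < a) (hb : 0 < b) : 0 < realBeta a b := by
  unfold realBeta
  have := Real.Gamma_pos_of_pos (add_pos ha hb)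
  positivity

lemma gammaPDFReal_of_nonneg {a r x : ℝ} (hx : 0 ≤ x) :
    gammaPDFReal a r x = r ^ a / Real.Gamma a * x ^ (a - 1) * Real.exp (-(r * x)) :=
  if_pos hx

lemma fG_eq_gammaPDFReal {k Ω y : ℝ} (hk : 0 ≤ k) (hΩ : 0 ≤ Ω) (hy : 0 ≤ y) :
    fG k Ω y = gammaPDFReal k (k / Ω) y := by
  rw [gammaPDFReal_of_nonneg hy, fG, Real.div_rpow hk hΩ, neg_mul, neg_div, mul_div_right_comm,
    div_div, mul_comm (Ω ^ k)]

section GammaProduct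

variable {a b r s u : ℝ}

lemma mul_gammaPDFReal_mul_gammaPDFReal (hu : 0 ≤ u) {t : ℝ} (ht : 0 < t) :
    t * gammaPDFReal a r (u * t) * gammaPDFReal b s t =
      r ^ a * s ^ b / (Real.Gamma a * Real.Gamma b) * u ^ (a - 1) *
        (t ^ (a + b - 1) * Real.exp (-((r * u + s) * t))) := by
  rw [gammaPDFReal_of_nonneg (by positivity), gammaPDFReal_of_nonneg ht.le,
    Real.mul_rpow hu ht.le, show a + b - 1 = (a - 1) + 1 + (b - 1) by ring,
    Real.rpow_add ht, Real.rpow_add ht, Real.rpow_one,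
    show -((r * u + s) * t) = -(r * (u * t)) + -(s * t) by ring, Real.exp_add]
  ring

lemma integrableOn_mul_gammaPDFReal_mul_gammaPDFReal (ha : 0 < a) (hb : 0 < b) (hr : 0 ≤ r)
    (hs : 0 < s) (hu : 0 ≤ u) :
    IntegrableOn (fun t ↦ t * gammaPDFReal a r (u * t) * gammaPDFReal b s t) (Ioi 0) := by
  have hkernel : IntegrableOn (fun t : ℝ ↦ t ^ (a + b - 1) * Real.exp (-((r * u + s) * t)))
      (Ioi 0) := by
    simpa only [Real.rpow_one, neg_mul] using integrableOn_rpow_mul_exp_neg_mul_rpow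
      (by linarith : -1 < a + b - 1) one_pos (by positivity : 0 < r * u + s)
  exact IntegrableOn.congr_fun (hkernel.const_mul _)
    (fun t ht ↦ (mul_gammaPDFReal_mul_gammaPDFReal hu ht).symm) measurableSet_Ioi

theorem integral_mul_gammaPDFReal_mul_gammaPDFReal (ha : 0 < a) (hb : 0 < b) (hr : 0 ≤ r)
    (hs : 0 < s) (hu : 0 ≤ u) :
    ∫ t in Ioi 0, t * gammaPDFReal a r (u * t) * gammaPDFReal b s t =
      r ^ a * s ^ b * u ^ (a - 1) / (realBeta a b * (r * u + s) ^ (a + b)) := by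
  have hrus : 0 < r * u + s := by positivity
  rw [setIntegral_congr_fun measurableSet_Ioi fun t ht ↦ mul_gammaPDFReal_mul_gammaPDFReal hu ht,
    integral_const_mul, Real.integral_rpow_mul_exp_neg_mul_Ioi (add_pos ha hb) hrus,
    one_div, Real.inv_rpow hrus.le, realBeta]
  have := Real.Gamma_pos_of_pos (add_pos ha hb)
  field_simp

end GammaProduct

lemma fF_eq {m k Ω u : ℝ} (hm : 1 < m) (hk : 0 < k) (hΩ : 0 < Ω) (hu : 0 ≤ u) :
    fF m k Ω u = (k / Ω) ^ k * (m - 1) ^ m * u ^ (k - 1) /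
      (realBeta k m * (k / Ω * u + (m - 1)) ^ (k + m)) := by
  have hsum : k / Ω * u + (m - 1) = ((m - 1) * Ω + k * u) / Ω := by field_simp; ring
  have hden : 0 < (m - 1) * Ω + k * u := by nlinarith
  have := realBeta_pos hk (by linarith : 0 < m)
  rw [hsum, Real.div_rpow hden.le hΩ.le, Real.div_rpow hk.le hΩ.le, fF, realBeta_comm,
    add_comm k m, Real.rpow_add hΩ]
  field_simp

theorem mixture_gamma_to_F_general (N : ℕ) (w k Ω : Fin N → ℝ) (m : ℝ) (hm : 1 < m)
    (hk : ∀ i, 0 < k i) (hΩ : ∀ i, 0 < Ω i)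
    (fX : ℝ → ℝ) (hfX : ∀ x, fX x = ∑ i, w i * fG (k i) (Ω i) x)
    (u : ℝ) (hu : 0 < u) :
    ∫ t in Ioi (0:ℝ), t * fX (u * t) *
        ((m - 1) ^ m / Real.Gamma m * t ^ (m - 1) * Real.exp (-(m - 1) * t)) =
      ∑ i, w i * fF m (k i) (Ω i) u := by
  have hm0 : 0 < m - 1 := by linarith
  have hmixture : ∀ t ∈ Ioi (0:ℝ), t * fX (u * t) *
      ((m - 1) ^ m / Real.Gamma m * t ^ (m - 1) * Real.exp (-(m - 1) * t)) =
        ∑ i, w i * (t * gammaPDFReal (k i) (k i / Ω i) (u * t) * gammaPDFReal m (m - 1) t) := by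
    intro t (ht : 0 < t)
    rw [gammaPDFReal_of_nonneg ht.le, hfX, Finset.mul_sum, Finset.sum_mul, neg_mul]
    refine Finset.sum_congr rfl fun i _ ↦ ?_
    rw [fG_eq_gammaPDFReal (hk i).le (hΩ i).le (by positivity)]
    ring
  have hrate : ∀ i, 0 < k i / Ω i := fun i ↦ div_pos (hk i) (hΩ i)
  rw [setIntegral_congr_fun measurableSet_Ioi hmixture, integral_finsetSum _ fun i _ ↦
    (integrableOn_mul_gammaPDFReal_mul_gammaPDFReal (hk i) (by linarith) (hrate i).le hm0
      hu.le).const_mul (w i)]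
  refine Finset.sum_congr rfl fun i _ ↦ ?_
  rw [integral_const_mul, integral_mul_gammaPDFReal_mul_gammaPDFReal (hk i) (by linarith)
    (hrate i).le hm0 hu.le, fF_eq hm (hk i) (hΩ i) hu.le]

/-- If the fading density is a finite mixture of Gamma densities, then the
inverse-gamma composite density is the corresponding mixture of F densities. -/
theorem mixture_gamma_to_F (N : ℕ) (w k Ω : Fin N → ℝ) (m : ℝ) (hm : 1 < m)
    (hk : ∀ i, 0 < k i) (hΩ : ∀ i, 0 < Ω i) (hw0 : ∀ i, 0 ≤ w i) (hw1 : ∑ i, w i = 1)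
    (fX : ℝ → ℝ) (hfX : ∀ x, fX x = ∑ i, w i * fG (k i) (Ω i) x)
    (u : ℝ) (hu : 0 < u) :
    ∫ t in Ioi (0:ℝ), t * fX (u * t) *
        ((m - 1) ^ m / Real.Gamma m * t ^ (m - 1) * Real.exp (-(m - 1) * t)) =
      ∑ i, w i * fF m (k i) (Ω i) u :=
  mixture_gamma_to_F_general N w k Ω m hm hk hΩ fX hfX u hu
end

section
/- Let X be a nonnegative random variable whose CDF satisfies F_X(x) = (α/(β+1)) x^{β+1} + o(x^{β+1}) as x → 0⁺ for constants α > 0, β ≥ 0, plus the exact dominance condition F_X(x) ≤ C x^{β+1} for all x. Let ξ be inverse gamma with shape m > 1 and mean 1, independent of X, and W = ξX. Then as u → 0⁺, the CDF of W satisfies F_W(u) ~ Γ(β+m+1)/(Γ(m)(m−1)^{β+1}) · (α/(β+1)) u^{β+1}. -/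
/-!
Writing `f` for the Gamma(m, m - 1) density of `1/ξ`, `F_W(u) / u^(β+1) = ∫ F_X(u t) / u^(β+1) f(t) dt`.
The integrand tends to `α/(β+1) · t^(β+1) f(t)` pointwise and is dominated by `C t^(β+1) |f(t)|`, so
by dominated convergence the limit is `α/(β+1)` times the `(β+1)`-st moment of `f`, which is
`Γ(m+β+1) / (Γ(m) (m-1)^(β+1))`.
-/

open MeasureTheory Set Filter Topology

theorem tendsto_comp_mul_div_rpow {g : ℝ → ℝ} {p L t : ℝ} (ht : 0 < t)
    (hg : Tendsto (fun x => g x / x ^ p) (𝓝[>] 0) (𝓝 L)) :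
    Tendsto (fun u => g (u * t) / u ^ p) (𝓝[>] 0) (𝓝 (L * t ^ p)) := by
  have hscale : Tendsto (fun u : ℝ => u * t) (𝓝[>] 0) (𝓝[>] 0) := by
    simpa using TendstoNhdsWithinIoi.mul_const ht (tendsto_id (x := 𝓝[>] (0:ℝ)))
  refine ((hg.comp hscale).mul_const (t ^ p)).congr' ?_
  filter_upwards [self_mem_nhdsWithin] with u (hu : 0 < u)
  have htp : t ^ p ≠ 0 := (Real.rpow_pos_of_pos ht p).ne'
  rw [Function.comp_apply, Real.mul_rpow hu.le ht.le, div_mul_eq_mul_div,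
    mul_div_mul_right _ _ htp]

theorem tendsto_integral_comp_mul_div_rpow {g f : ℝ → ℝ} {p L C : ℝ} (hg : Measurable g)
    (hf : AEStronglyMeasurable f (volume.restrict (Ioi 0)))
    (hint : IntegrableOn (fun t => t ^ p * f t) (Ioi 0))
    (hg_nonneg : ∀ x, 0 < x → 0 ≤ g x) (hg_le : ∀ x, 0 < x → g x ≤ C * x ^ p)
    (hg_lim : Tendsto (fun x => g x / x ^ p) (𝓝[>] 0) (𝓝 L)) :
    Tendsto (fun u => (∫ t in Ioi 0, g (u * t) * f t) / u ^ p) (𝓝[>] 0)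
      (𝓝 (L * ∫ t in Ioi 0, t ^ p * f t)) := by
  simp_rw [← integral_div, mul_div_right_comm, ← integral_const_mul]
  refine tendsto_integral_filter_of_dominated_convergence (fun t => C * ‖t ^ p * f t‖)
    ?_ ?_ (hint.norm.const_mul C) ?_
  · exact .of_forall fun u =>
      ((hg.comp (measurable_const_mul u)).div_const _).aestronglyMeasurable.mul hf
  · filter_upwards [self_mem_nhdsWithin] with u (hu : 0 < u)
    filter_upwards [ae_restrict_mem measurableSet_Ioi] with t (ht : 0 < t)
    have hup : 0 < u ^ p := Real.rpow_pos_of_pos hu p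
    have hbound : g (u * t) / u ^ p ≤ C * t ^ p := by
      rw [div_le_iff₀ hup]
      calc g (u * t) ≤ C * (u * t) ^ p := hg_le _ (mul_pos hu ht)
        _ = C * t ^ p * u ^ p := by rw [Real.mul_rpow hu.le ht.le]; ring
    rw [norm_mul, norm_mul, Real.norm_of_nonneg (Real.rpow_pos_of_pos ht p).le,
      Real.norm_of_nonneg (div_nonneg (hg_nonneg _ (mul_pos hu ht)) hup.le), ← mul_assoc]
    gcongr
  · filter_upwards [ae_restrict_mem measurableSet_Ioi] with t (ht : 0 < t)
    simpa only [mul_assoc] using (tendsto_comp_mul_div_rpow ht hg_lim).mul_const (f t)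

theorem rpow_mul_gamma_density_eqOn (a r s : ℝ) :
    EqOn (fun t => t ^ s * (r ^ a / Real.Gamma a * t ^ (a - 1) * Real.exp (-r * t)))
      (fun t => r ^ a / Real.Gamma a * (t ^ (a + s - 1) * Real.exp (-(r * t)))) (Ioi 0) := by
  intro t (ht : 0 < t)
  have : t ^ (a + s - 1) = t ^ s * t ^ (a - 1) := by rw [← Real.rpow_add ht]; ring_nf
  simp only [this, neg_mul]
  ring

theorem integrableOn_rpow_mul_gamma_density {a r s : ℝ} (hr : 0 < r) (has : 0 < a + s) :
    IntegrableOn (fun t => t ^ s * (r ^ a / Real.Gamma a * t ^ (a - 1) * Real.exp (-r * t)))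
      (Ioi 0) := by
  refine IntegrableOn.congr_fun ?_ (rpow_mul_gamma_density_eqOn a r s).symm measurableSet_Ioi
  have h := integrableOn_rpow_mul_exp_neg_mul_rpow (s := a + s - 1) (by linarith) one_pos hr
  simp only [Real.rpow_one, ← neg_mul] at h ⊢
  exact h.const_mul _

theorem integral_rpow_mul_gamma_density {a r s : ℝ} (hr : 0 < r) (has : 0 < a + s) :
    ∫ t in Ioi 0, t ^ s * (r ^ a / Real.Gamma a * t ^ (a - 1) * Real.exp (-r * t)) =
      Real.Gamma (a + s) / (Real.Gamma a * r ^ s) := by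
  rw [setIntegral_congr_fun measurableSet_Ioi (rpow_mul_gamma_density_eqOn a r s),
    integral_const_mul, Real.integral_rpow_mul_exp_neg_mul_Ioi has hr,
    Real.div_rpow zero_le_one hr.le, Real.one_rpow, Real.rpow_add hr]
  have : 0 < r ^ a := Real.rpow_pos_of_pos hr a
  have : 0 < r ^ s := Real.rpow_pos_of_pos hr s
  field_simp

theorem composite_cdf_asymptotic_general (m α β C : ℝ) (hm : 1 < m) (hα : 0 < α) (hβ : 0 ≤ β)
    (FX : ℝ → ℝ) (hmeas : Measurable FX) (h0 : ∀ x, 0 ≤ FX x)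
    (hlim : Tendsto (fun x => FX x / x ^ (β + 1)) (𝓝[>] 0) (𝓝 (α / (β + 1))))
    (hdom : ∀ x, 0 ≤ x → FX x ≤ C * x ^ (β + 1)) :
    Tendsto (fun u => (∫ t in Ioi (0:ℝ), FX (u * t) *
          ((m - 1) ^ m / Real.Gamma m * t ^ (m - 1) * Real.exp (-(m - 1) * t))) /
        (Real.Gamma (β + m + 1) / (Real.Gamma m * (m - 1) ^ (β + 1)) * (α / (β + 1)) * u ^ (β + 1)))
      (𝓝[>] 0) (𝓝 1) := by
  have hr : 0 < m - 1 := by linarith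
  have hs : 0 < m + (β + 1) := by linarith
  have hmoment := integral_rpow_mul_gamma_density hr hs
  rw [show m + (β + 1) = β + m + 1 by ring] at hmoment
  set K := Real.Gamma (β + m + 1) / (Real.Gamma m * (m - 1) ^ (β + 1))
  have hK : 0 < K := by
    have := Real.Gamma_pos_of_pos (by linarith : 0 < m)
    have := Real.Gamma_pos_of_pos (by linarith : 0 < β + m + 1)
    positivity
  have hscaled := tendsto_integral_comp_mul_div_rpow hmeas (by fun_prop)
    (integrableOn_rpow_mul_gamma_density hr hs) (fun x _ => h0 x) (fun x hx => hdom x hx.le) hlim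
  rw [hmoment] at hscaled
  convert hscaled.div_const (K * (α / (β + 1))) using 2
  · rw [div_div, mul_comm]
  · field_simp

/-- Asymptotic CDF (outage probability) of an inverse-gamma composite model: if the
baseline fading CDF behaves as (α/(β+1)) x^{β+1} near 0 and is dominated by C x^{β+1},
then F_W(u) ~ Γ(β+m+1)/(Γ(m)(m−1)^{β+1}) · (α/(β+1)) u^{β+1} as u → 0⁺. -/
theorem composite_cdf_asymptotic (m α β C : ℝ) (hm : 1 < m) (hα : 0 < α) (hβ : 0 ≤ β)
    (FX : ℝ → ℝ) (hmeas : Measurable FX) (hmono : Monotone FX) (h0 : ∀ x, 0 ≤ FX x)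
    (hlim : Tendsto (fun x => FX x / x ^ (β + 1)) (𝓝[>] 0) (𝓝 (α / (β + 1))))
    (hdom : ∀ x, 0 ≤ x → FX x ≤ C * x ^ (β + 1)) :
    Tendsto (fun u => (∫ t in Ioi (0:ℝ), FX (u * t) *
          ((m - 1) ^ m / Real.Gamma m * t ^ (m - 1) * Real.exp (-(m - 1) * t))) /
        (Real.Gamma (β + m + 1) / (Real.Gamma m * (m - 1) ^ (β + 1)) * (α / (β + 1)) * u ^ (β + 1)))
      (𝓝[>] 0) (𝓝 1) :=
  composite_cdf_asymptotic_general m α β C hm hα hβ FX hmeas h0 hlim hdom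
end

section
/- The κ–μ shadowed power density f(x) = (μ^μ m̲^{m̲} (1+κ)^μ)/(Γ(μ) Ω^μ (μκ+m̲)^{m̲}) x^{μ−1} e^{−μ(1+κ)x/Ω} ₁F₁(m̲; μ; μ²κ(1+κ)x/((μκ+m̲)Ω)) can be written as the gamma mixture f(x) = Σ_{i=0}^∞ w_i f^G(μ+i, Ω(μ+i)/(μ(1+κ)); x), with weights w_i = Γ(m̲+i)/(Γ(m̲) i!) · (μκ)^i m̲^{m̲}/(μκ+m̲)^{m̲+i}, and the weights w_i are nonnegative and sum to 1. -/
/-!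
Expanding `₁F₁(m̲; μ; z)` termwise, the `n`-th term times the prefactor is, after
`Γ(μ + n) = (μ)ₙ Γ(μ)`, the negative binomial weight `wₙ` (shape `m̲`, mean `μκ`) times the
gamma density of shape `μ + n` and scale `Ω / (μ(1 + κ))`. The weights are
`(m̲)ₙ / n! · qⁿ (1 - q)^m̲` with `q = μκ / (μκ + m̲)`, so they sum to one by the binomial series
`∑ (m̲)ₙ / n! · qⁿ = (1 - q)^(-m̲)`.
-/

open MeasureTheory Set

/-- Kummer confluent hypergeometric function ₁F₁(a;c;z). -/
noncomputable def oneF1 (a c z : ℝ) : ℝ :=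
  ∑' n : ℕ, ((ascPochhammer ℝ n).eval a / (ascPochhammer ℝ n).eval c) * z ^ n / (n.factorial : ℝ)

theorem Real.Gamma_add_nat_eq_ascPochhammer_mul {a : ℝ} (ha : 0 < a) (n : ℕ) :
    Real.Gamma (a + n) = (ascPochhammer ℝ n).eval a * Real.Gamma a := by
  induction n with
  | zero => simp
  | succ n ih =>
    rw [Nat.cast_succ, ← add_assoc, Real.Gamma_add_one (by positivity), ih,
      ascPochhammer_succ_eval]
    ring

theorem Ring.choose_add_sub_one_eq_ascPochhammer_div {K : Type*} [Field K] [CharZero K]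
    (a : K) (n : ℕ) :
    Ring.choose (a + n - 1) n = (ascPochhammer K n).eval a / n.factorial := by
  rw [Ring.choose_eq_smul, Polynomial.descPochhammer_smeval_eq_ascPochhammer,
    Polynomial.ascPochhammer_smeval_eq_eval, smul_eq_mul, inv_mul_eq_div]
  ring_nf

theorem hasSum_ascPochhammer_div_factorial_mul_pow (a : ℝ) {q : ℝ} (hq : |q| < 1) :
    HasSum (fun n : ℕ => (ascPochhammer ℝ n).eval a / n.factorial * q ^ n)
      ((1 - q) ^ (-a)) := by
  have h := (Real.one_div_one_sub_rpow_hasFPowerSeriesOnBall_zero a).hasSum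
    (y := q) (by simpa [enorm_eq_nnnorm, ← NNReal.coe_lt_coe] using hq)
  simpa [FormalMultilinearSeries.ofScalars_apply_eq, Ring.choose_add_sub_one_eq_ascPochhammer_div,
    mul_comm, Real.rpow_neg (sub_nonneg.2 (abs_lt.1 hq).2.le)] using h

/-- The negative binomial probability mass function with shape `r` and mean `s`, i.e. with
success probability `s / (s + r)`. -/
noncomputable def negBinomialWeight (r s : ℝ) (n : ℕ) : ℝ :=
  Real.Gamma (r + n) / (Real.Gamma r * (n.factorial : ℝ)) * (s ^ n * r ^ r / (s + r) ^ (r + n))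

section NegBinomial

variable {r s : ℝ}

theorem negBinomialWeight_nonneg (hr : 0 < r) (hs : 0 ≤ s) (n : ℕ) :
    0 ≤ negBinomialWeight r s n := by
  unfold negBinomialWeight
  have hΓrn := Real.Gamma_pos_of_pos (show 0 < r + n by positivity)
  have hΓr := Real.Gamma_pos_of_pos hr
  positivity

theorem negBinomialWeight_eq (hr : 0 < r) (hs : 0 ≤ s) (n : ℕ) :
    negBinomialWeight r s n =
      (ascPochhammer ℝ n).eval r / n.factorial * (s / (s + r)) ^ n * (r / (s + r)) ^ r := by
  have hsr : 0 < s + r := by positivity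
  have hΓr := Real.Gamma_pos_of_pos hr
  rw [negBinomialWeight, Real.Gamma_add_nat_eq_ascPochhammer_mul hr, Real.rpow_add hsr,
    Real.rpow_natCast, div_pow, Real.div_rpow hr.le hsr.le]
  field_simp

theorem hasSum_negBinomialWeight (hr : 0 < r) (hs : 0 ≤ s) :
    HasSum (negBinomialWeight r s) 1 := by
  have hsr : 0 < s + r := by positivity
  have hq : |s / (s + r)| < 1 := by
    rw [abs_of_nonneg (by positivity), div_lt_one hsr]
    linarith
  have hp : 1 - s / (s + r) = r / (s + r) := by field_simp; ring
  have h := (hasSum_ascPochhammer_div_factorial_mul_pow r hq).mul_right ((r / (s + r)) ^ r)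
  rw [hp, Real.rpow_neg (by positivity), inv_mul_cancel₀ (by positivity)] at h
  rwa [← funext (negBinomialWeight_eq hr hs)] at h

end NegBinomial

theorem fG_mul_shape_eq {k θ : ℝ} (hk : 0 < k) (hθ : 0 < θ) (y : ℝ) :
    fG k (θ * k) y = y ^ (k - 1) * Real.exp (-y / θ) / (Real.Gamma k * θ ^ k) := by
  have hkk := Real.rpow_pos_of_pos hk k
  rw [fG, Real.mul_rpow hθ.le hk.le, show -k * y / (θ * k) = -y / θ by field_simp]
  field_simp

theorem tsum_negBinomialWeight_mul_fG {r s k θ y : ℝ} (hr : 0 < r) (hs : 0 ≤ s) (hk : 0 < k)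
    (hθ : 0 < θ) (hy : 0 < y) :
    ∑' n : ℕ, negBinomialWeight r s n * fG (k + n) (θ * (k + n)) y =
      (r / (s + r)) ^ r * (y ^ (k - 1) * Real.exp (-y / θ) / (Real.Gamma k * θ ^ k)) *
        oneF1 r k (s / (s + r) * y / θ) := by
  rw [oneF1, ← tsum_mul_left]
  refine tsum_congr fun n => ?_
  have hpoch := ascPochhammer_pos n k hk
  have hΓk := Real.Gamma_pos_of_pos hk
  rw [negBinomialWeight_eq hr hs, fG_mul_shape_eq (by positivity) hθ,
    Real.Gamma_add_nat_eq_ascPochhammer_mul hk, add_sub_right_comm, Real.rpow_add hy,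
    Real.rpow_add hθ, Real.rpow_natCast, Real.rpow_natCast]
  simp only [div_pow, mul_pow]
  field_simp

/-- The κ–μ shadowed power density as a countable mixture of gamma densities, with
nonnegative weights summing to one. -/
theorem kappa_mu_shadowed_gamma_mixture (κ μ mm Ω : ℝ) (hκ : 0 ≤ κ) (hμ : 0 < μ)
    (hmm : 0 < mm) (hΩ : 0 < Ω) :
    (∀ x : ℝ, 0 < x →
        μ ^ μ * mm ^ mm * (1 + κ) ^ μ / (Real.Gamma μ * Ω ^ μ * (μ * κ + mm) ^ mm) *
            x ^ (μ - 1) * Real.exp (-μ * (1 + κ) * x / Ω) *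
            oneF1 mm μ (μ ^ 2 * κ * (1 + κ) * x / ((μ * κ + mm) * Ω)) =
          ∑' i : ℕ,
            (Real.Gamma (mm + i) / (Real.Gamma mm * (i.factorial : ℝ)) *
                ((μ * κ) ^ i * mm ^ mm / (μ * κ + mm) ^ (mm + i))) *
              fG (μ + i) (Ω * (μ + i) / (μ * (1 + κ))) x) ∧
      (∀ i : ℕ, 0 ≤ Real.Gamma (mm + i) / (Real.Gamma mm * (i.factorial : ℝ)) *
          ((μ * κ) ^ i * mm ^ mm / (μ * κ + mm) ^ (mm + i))) ∧
      (∑' i : ℕ, Real.Gamma (mm + i) / (Real.Gamma mm * (i.factorial : ℝ)) *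
          ((μ * κ) ^ i * mm ^ mm / (μ * κ + mm) ^ (mm + i)) = 1) := by
  have hμκ : 0 ≤ μ * κ := by positivity
  refine ⟨fun x hx => ?_, negBinomialWeight_nonneg hmm hμκ,
    (hasSum_negBinomialWeight hmm hμκ).tsum_eq⟩
  have hθ : 0 < Ω / (μ * (1 + κ)) := by positivity
  have hmix := tsum_negBinomialWeight_mul_fG hmm hμκ hμ hθ hx
  simp only [← mul_div_right_comm Ω] at hmix
  refine Eq.trans ?_ hmix.symm
  have harg : μ * κ / (μ * κ + mm) * x / (Ω / (μ * (1 + κ))) =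
      μ ^ 2 * κ * (1 + κ) * x / ((μ * κ + mm) * Ω) := by
    field_simp
  have hexp : -x / (Ω / (μ * (1 + κ))) = -μ * (1 + κ) * x / Ω := by
    field_simp
  have hΓμ := Real.Gamma_pos_of_pos hμ
  rw [harg, hexp, Real.div_rpow hmm.le (by positivity), Real.div_rpow hΩ.le (by positivity),
    Real.mul_rpow hμ.le (by positivity)]
  field_simp
end
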